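/- For every integer n \ge 2 and every real \varphi with 0 \le \varphi < \pi/3, one has \int_1^\infty t^{-3} (1 + t\cos\varphi / n)^{-(n+1)} dt \le (1/\cos\varphi) (1 + \cos\varphi/n)^{-n} \le 1/\cos\varphi. -/

import Mathlib

open Real MeasureTheory Set Filter

/-!
With `a = cos φ / n > 0`, the factor `t⁻³` is at most `1` on `(1, ∞)`, and
`-(1 + t a)^{-n} / (n a)` is an explicit primitive of `(1 + t a)^{-(n+1)}`; the integral of the
latter over `(1, ∞)` is therefore `(1 + a)^{-n} / (n a) = (1 / cos φ) (1 + cos φ / n)^{-n}`.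
-/

theorem setIntegral_mul_le_setIntegral_of_le_one {α : Type*} [MeasurableSpace α]
    {μ : Measure α} {s : Set α} (hs : MeasurableSet s) {w g : α → ℝ}
    (hw : AEStronglyMeasurable w (μ.restrict s))
    (hw0 : ∀ x ∈ s, 0 ≤ w x) (hw1 : ∀ x ∈ s, w x ≤ 1) (hg : IntegrableOn g s μ)
    (hg0 : ∀ x ∈ s, 0 ≤ g x) :
    IntegrableOn (fun x => w x * g x) s μ ∧ ∫ x in s, w x * g x ∂μ ≤ ∫ x in s, g x ∂μ := by
  have hwg : IntegrableOn (fun x => w x * g x) s μ := by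
    refine hg.bdd_mul (c := 1) hw ?_
    filter_upwards [ae_restrict_mem hs] with x hx
    rw [Real.norm_of_nonneg (hw0 x hx)]
    exact hw1 x hx
  exact ⟨hwg, setIntegral_mono_on hwg hg hs fun x hx =>
    mul_le_of_le_one_left (hg0 x hx) (hw1 x hx)⟩

theorem hasDerivAt_one_add_mul_zpow_neg (a : ℝ) (n : ℕ) {x : ℝ} (hx : 1 + x * a ≠ 0) :
    HasDerivAt (fun t : ℝ => (1 + t * a) ^ (-(n : ℤ)))
      (-(n * a) * (1 + x * a) ^ (-((n : ℤ) + 1))) x := by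
  have hlin : HasDerivAt (fun t : ℝ => 1 + t * a) a x := by
    simpa using ((hasDerivAt_id x).mul_const a).const_add 1
  refine ((hasDerivAt_zpow (-(n : ℤ)) _ (Or.inl hx)).comp x hlin).congr_deriv ?_
  rw [show -(n : ℤ) - 1 = -((n : ℤ) + 1) by ring]
  push_cast
  ring

theorem tendsto_one_add_mul_zpow_neg_atTop {a : ℝ} (ha : 0 < a) {n : ℕ} (hn : n ≠ 0) :
    Tendsto (fun t : ℝ => (1 + t * a) ^ (-(n : ℤ))) atTop (nhds 0) := by
  have hlin : Tendsto (fun t : ℝ => 1 + t * a) atTop atTop :=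
    tendsto_atTop_add_const_left _ 1 (tendsto_id.atTop_mul_const ha)
  exact (tendsto_zpow_atTop_zero (by omega)).comp hlin

theorem integral_Ioi_one_add_mul_zpow_neg {a b : ℝ} (ha : 0 < a) (hb : 0 < 1 + b * a) {n : ℕ}
    (hn : n ≠ 0) :
    IntegrableOn (fun t : ℝ => (1 + t * a) ^ (-((n : ℤ) + 1))) (Ioi b) ∧
      ∫ t in Ioi b, (1 + t * a) ^ (-((n : ℤ) + 1)) = (1 + b * a) ^ (-(n : ℤ)) / (n * a) := by
  have hpos : ∀ x ∈ Ici b, 0 < 1 + x * a := fun x hx => by nlinarith [mem_Ici.mp hx]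
  have hprim : ∀ x ∈ Ici b, HasDerivAt (fun t : ℝ => -(1 + t * a) ^ (-(n : ℤ)) / (n * a))
      ((1 + x * a) ^ (-((n : ℤ) + 1))) x := fun x hx => by
    refine (((hasDerivAt_one_add_mul_zpow_neg a n (hpos x hx).ne').neg).div_const
      (n * a)).congr_deriv ?_
    field_simp
  have hnonneg : ∀ x ∈ Ioi b, 0 ≤ (1 + x * a) ^ (-((n : ℤ) + 1)) := fun x hx =>
    (zpow_pos (hpos x (Ioi_subset_Ici_self hx)) _).le
  have hlim : Tendsto (fun t : ℝ => -(1 + t * a) ^ (-(n : ℤ)) / (n * a)) atTop (nhds 0) := by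
    simpa using ((tendsto_one_add_mul_zpow_neg_atTop ha hn).neg).div_const (n * a)
  refine ⟨integrableOn_Ioi_deriv_of_nonneg' hprim hnonneg hlim, ?_⟩
  rw [integral_Ioi_of_hasDerivAt_of_nonneg' hprim hnonneg hlim]
  ring

/-- For every integer `n ≥ 2` and real `φ` with `0 ≤ φ < π/3`, one has
`∫₁^∞ t⁻³ (1 + t cos φ / n)^{-(n+1)} dt ≤ (1/cos φ)(1 + cos φ/n)^{-n} ≤ 1/cos φ`. -/
theorem stmt_5 :
    ∀ (n : ℕ), 2 ≤ n → ∀ φ : ℝ, 0 ≤ φ → φ < Real.pi / 3 →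
      (∫ t in Set.Ioi (1 : ℝ),
          t ^ (-3 : ℤ) * (1 + t * Real.cos φ / n) ^ (-((n : ℤ) + 1)))
        ≤ (1 / Real.cos φ) * (1 + Real.cos φ / n) ^ (-(n : ℤ)) ∧
      (1 / Real.cos φ) * (1 + Real.cos φ / n) ^ (-(n : ℤ)) ≤ 1 / Real.cos φ := by
  intro n hn φ hφ0 hφ1
  have hcos : 0 < cos φ := cos_pos_of_mem_Ioo ⟨by linarith [pi_pos], by linarith⟩
  have ha : 0 < cos φ / n := by positivity
  obtain ⟨hint, hval⟩ := integral_Ioi_one_add_mul_zpow_neg (b := 1) (n := n) ha (by linarith)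
    (by omega)
  refine ⟨?_, mul_le_of_le_one_right (by positivity)
    (zpow_le_one_of_nonpos₀ (by simpa using ha.le) (by omega))⟩
  calc (∫ t in Ioi (1 : ℝ), t ^ (-3 : ℤ) * (1 + t * cos φ / n) ^ (-((n : ℤ) + 1)))
      = ∫ t in Ioi (1 : ℝ), t ^ (-3 : ℤ) * (1 + t * (cos φ / n)) ^ (-((n : ℤ) + 1)) := by
        simp_rw [mul_div_assoc]
    _ ≤ ∫ t in Ioi (1 : ℝ), (1 + t * (cos φ / n)) ^ (-((n : ℤ) + 1)) := by
        refine (setIntegral_mul_le_setIntegral_of_le_one measurableSet_Ioi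
          (Measurable.aestronglyMeasurable (by fun_prop)) (fun t ht => ?_) (fun t ht => ?_) hint
          (fun t ht => ?_)).2
        · exact (zpow_pos (zero_lt_one.trans ht) _).le
        · exact zpow_le_one_of_nonpos₀ (le_of_lt ht) (by norm_num)
        · exact (zpow_pos (by nlinarith [mem_Ioi.mp ht]) _).le
    _ = 1 / cos φ * (1 + cos φ / n) ^ (-(n : ℤ)) := by
        rw [hval]
        field_simp
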